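/- Let G be any graph on n vertices and π any permutation of V(G). Then γ_{(n+γ(G))/(2n)}(πG) = 1 if and only if γ(G) = 1. -/

import Mathlib

open SimpleGraph

/-- Closed neighborhood of a set of vertices. -/
def closedNbhd {V : Type*} (G : SimpleGraph V) (S : Set V) : Set V :=
  {v | v ∈ S ∨ ∃ u ∈ S, G.Adj u v}

/-- `S` is a `p`-dominating set of `G`. -/
def IsPDomSet {V : Type*} [Fintype V] (G : SimpleGraph V) (p : ℝ) (S : Set V) : Prop :=
  p ≤ (closedNbhd G S).ncard / (Fintype.card V : ℝ)

/-- The `p`-domination number of `G`. -/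
noncomputable def pDomNum {V : Type*} [Fintype V] (G : SimpleGraph V) (p : ℝ) : ℕ :=
  sInf {k | ∃ S : Set V, IsPDomSet G p S ∧ S.ncard = k}

/-- `S` is a dominating set of `G`. -/
def IsDomSet {V : Type*} (G : SimpleGraph V) (S : Set V) : Prop :=
  ∀ v, v ∈ closedNbhd G S

/-- The domination number of `G`. -/
noncomputable def domNum {V : Type*} (G : SimpleGraph V) : ℕ :=
  sInf {k | ∃ S : Set V, IsDomSet G S ∧ S.ncard = k}

/-- The prism of `G` with respect to a permutation `π`. -/
def prism {V : Type*} (G : SimpleGraph V) (π : Equiv.Perm V) : SimpleGraph (V ⊕ V) where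
  Adj x y := match x, y with
    | .inl a, .inl b => G.Adj a b
    | .inr a, .inr b => G.Adj a b
    | .inl a, .inr b => π a = b
    | .inr a, .inl b => π b = a
  symm := ⟨by rintro (a|a) (b|b) h <;> simp_all [SimpleGraph.adj_comm]⟩
  loopless := ⟨by rintro (a|a) h <;> simp_all⟩

/-! A vertex of `πG` is adjacent to its closed neighbourhood in its own copy of `G` and to one
vertex of the other copy, so it dominates at most `n + 1` of the `2n` vertices, and exactly
`n + 1` when it dominates its copy. Hence a single vertex is `(n + γ(G)) / (2n)`-dominating iff
`γ(G) ≤ 1`, while the empty set is excluded because the threshold is positive when `n > 0`. -/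

lemma Nat.sInf_eq_one_iff {s : Set ℕ} : sInf s = 1 ↔ 1 ∈ s ∧ 0 ∉ s := by
  constructor
  · intro h
    refine ⟨h ▸ Nat.sInf_mem (Nat.nonempty_of_sInf_eq_succ h), fun h0 => ?_⟩
    simp [Nat.sInf_eq_zero.2 (.inl h0)] at h
  · rintro ⟨h1, h0⟩
    refine le_antisymm (Nat.sInf_le h1) (Nat.one_le_iff_ne_zero.2 fun h => ?_)
    rcases Nat.sInf_eq_zero.1 h with h | h
    · exact h0 h
    · simp [h] at h1

lemma sInf_ncard_eq_one_iff {α : Type*} [Finite α] (P : Set α → Prop) :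
    sInf {k | ∃ S, P S ∧ S.ncard = k} = 1 ↔ (∃ a, P {a}) ∧ ¬ P ∅ := by
  rw [Nat.sInf_eq_one_iff]
  constructor
  · rintro ⟨⟨S, hS, hS1⟩, h0⟩
    obtain ⟨a, rfl⟩ := Set.ncard_eq_one.1 hS1
    exact ⟨⟨a, hS⟩, fun h => h0 ⟨∅, h, Set.ncard_empty α⟩⟩
  · rintro ⟨⟨a, ha⟩, h0⟩
    refine ⟨⟨{a}, ha, Set.ncard_singleton a⟩, fun ⟨S, hS, hS0⟩ => h0 ?_⟩
    rwa [(Set.ncard_eq_zero S.toFinite).1 hS0] at hS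

section Domination

variable {V : Type*} (G : SimpleGraph V)

@[simp]
lemma closedNbhd_empty : closedNbhd G ∅ = ∅ := by
  ext v; simp [closedNbhd]

lemma isDomSet_univ : IsDomSet G Set.univ := fun _ => Or.inl trivial

lemma not_isDomSet_empty [Nonempty V] : ¬ IsDomSet G ∅ := by
  simp [IsDomSet]

lemma isDomSet_iff_closedNbhd_eq_univ {S : Set V} : IsDomSet G S ↔ closedNbhd G S = Set.univ :=
  Set.eq_univ_iff_forall.symm

lemma domNum_pos [Finite V] [Nonempty V] : 0 < domNum G := by
  refine Nat.pos_of_ne_zero fun h => ?_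
  rcases Nat.sInf_eq_zero.1 h with ⟨S, hS, hS0⟩ | hempty
  · rw [Set.ncard_eq_zero] at hS0
    exact not_isDomSet_empty G (hS0 ▸ hS)
  · exact (Set.eq_empty_iff_forall_notMem.1 hempty) _ ⟨Set.univ, isDomSet_univ G, rfl⟩

lemma domNum_eq_one_iff [Finite V] : domNum G = 1 ↔ ∃ v, IsDomSet G {v} := by
  rw [domNum, sInf_ncard_eq_one_iff, and_iff_left_iff_imp]
  rintro ⟨v, -⟩
  have : Nonempty V := ⟨v⟩
  exact not_isDomSet_empty G

lemma isPDomSet_empty_iff [Fintype V] {p : ℝ} : IsPDomSet G p ∅ ↔ p ≤ 0 := by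
  simp [IsPDomSet]

lemma pDomNum_eq_one_iff [Fintype V] {p : ℝ} :
    pDomNum G p = 1 ↔ (∃ v, IsPDomSet G p {v}) ∧ 0 < p := by
  rw [pDomNum, sInf_ncard_eq_one_iff, isPDomSet_empty_iff, not_le]

end Domination

lemma Set.ncard_image_union_singleton {α β : Type*} {f : α → β} (hf : Function.Injective f)
    {b : β} (hb : b ∉ Set.range f) {T : Set α} (hT : T.Finite) :
    (f '' T ∪ {b}).ncard = T.ncard + 1 := by
  rw [Set.union_singleton, Set.ncard_insert_of_notMem (fun h => hb (Set.image_subset_range f T h))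
    (hT.image f), Set.ncard_image_of_injective T hf]

section Prism

variable {V : Type*} (G : SimpleGraph V) (π : Equiv.Perm V)

lemma closedNbhd_prism_inl (v : V) :
    closedNbhd (prism G π) {.inl v} = .inl '' closedNbhd G {v} ∪ {.inr (π v)} := by
  ext (a | a) <;> simp [closedNbhd, prism, eq_comm]

lemma closedNbhd_prism_inr (v : V) :
    closedNbhd (prism G π) {.inr v} = .inr '' closedNbhd G {v} ∪ {.inl (π.symm v)} := by
  ext (a | a) <;> simp [closedNbhd, prism, eq_comm, Equiv.eq_symm_apply]

variable [Finite V]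

lemma ncard_closedNbhd_prism_inl (v : V) :
    (closedNbhd (prism G π) {.inl v}).ncard = (closedNbhd G {v}).ncard + 1 := by
  rw [closedNbhd_prism_inl]
  exact Set.ncard_image_union_singleton Sum.inl_injective (by simp) (Set.toFinite _)

lemma ncard_closedNbhd_prism_inr (v : V) :
    (closedNbhd (prism G π) {.inr v}).ncard = (closedNbhd G {v}).ncard + 1 := by
  rw [closedNbhd_prism_inr]
  exact Set.ncard_image_union_singleton Sum.inr_injective (by simp) (Set.toFinite _)

lemma ncard_closedNbhd_prism_singleton_le (x : V ⊕ V) :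
    (closedNbhd (prism G π) {x}).ncard ≤ Nat.card V + 1 := by
  obtain ⟨v, hv⟩ : ∃ v, (closedNbhd (prism G π) {x}).ncard = (closedNbhd G {v}).ncard + 1 := by
    rcases x with v | v
    exacts [⟨v, ncard_closedNbhd_prism_inl G π v⟩, ⟨v, ncard_closedNbhd_prism_inr G π v⟩]
  rw [hv, ← Set.ncard_univ]
  exact Nat.add_le_add_right (Set.ncard_le_ncard (Set.subset_univ _)) 1

end Prism

theorem stmt7 {V : Type*} [Fintype V] (G : SimpleGraph V) (n : ℕ)
    (hn : Fintype.card V = n)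
    (π : Equiv.Perm V) :
    pDomNum (prism G π) (((n : ℝ) + domNum G) / (2 * n)) = 1 ↔ domNum G = 1 := by
  subst hn
  have hcard : (Fintype.card (V ⊕ V) : ℝ) = 2 * Fintype.card V := by
    rw [Fintype.card_sum]; push_cast; ring
  rw [pDomNum_eq_one_iff]
  constructor
  · rintro ⟨⟨x, hx⟩, -⟩
    have : Nonempty V := x.elim (⟨·⟩) (⟨·⟩)
    have hle := ncard_closedNbhd_prism_singleton_le G π x
    rw [IsPDomSet, hcard, div_le_div_iff_of_pos_right (by positivity)] at hx
    rw [Nat.card_eq_fintype_card] at hle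
    have hx' : Fintype.card V + domNum G ≤ (closedNbhd (prism G π) {x}).ncard := by
      exact_mod_cast hx
    have := domNum_pos G
    omega
  · intro h
    obtain ⟨v, hv⟩ := (domNum_eq_one_iff G).1 h
    have : Nonempty V := ⟨v⟩
    refine ⟨⟨.inl v, ?_⟩, by positivity⟩
    rw [IsPDomSet, hcard, ncard_closedNbhd_prism_inl, (isDomSet_iff_closedNbhd_eq_univ G).1 hv,
      Set.ncard_univ, Nat.card_eq_fintype_card, h]
    push_cast
    exact le_rfl
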